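/- Main Jacobian estimate (matrix form): assume the Kalman condition holds and that R₃(τ) is invertible for every τ ∈ (0,T]. Let Hψ be a symmetric n×n matrix such that Hψ + R₃(s)⁻¹R₄(s) is positive semidefinite for every s ∈ (0,T] (as holds for the Hessian of a Kantorovich potential at a point of twice differentiability), and set N(τ) := R₃(τ)Hψ + R₄(τ) for τ ∈ [0,T] (so N(τ) is the Jacobian ∇T_τ(x) of the intermediate transport map). Then for every 0 ≤ τ ≤ s ≤ T with s > 0: det(N(τ))^{1/n} ≥ (det(R₃(τ−s))/det(R₃(−s)))^{1/n} + (det(R₃(τ))/det(R₃(s)))^{1/n} · det(N(s))^{1/n}, where both terms on the right-hand side are nonnegative and the first is strictly positive when τ < s; in particular det(N(τ)) > 0 for every τ ∈ [0,T). -/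

import Mathlib

/-!
Write `S(τ) = R₃(τ)⁻¹R₄(τ)`. The flow `e^{-τΩH}` is symplectic, which makes `S` symmetric with
derivative `-R₃⁻¹BBᵀR₃⁻ᵀ ⪯ 0`, so `S` is antitone in the Loewner order on every interval where
`R₃` is invertible, and the group law of the flow gives `S(τ) - S(s) = R₃(τ)⁻¹R₃(τ-s)R₃(-s)⁻¹`.
Taking determinants at `τ = s/2` and using `R₃(-r) = -R₃(r)ᵀ` forces `det R₃(s) > 0`. Finally
`N(τ) = R₃(τ)(Hψ + S(τ))` and `Hψ + S(τ) = (S(τ) - S(s)) + (Hψ + S(s))` is a sum of two positive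
semidefinite matrices, so the estimate is Minkowski's determinant inequality
`det(X + Y)^{1/n} ≥ det X^{1/n} + det Y^{1/n}`, scaled by `det R₃(τ)^{1/n}`.
-/

open Matrix MeasureTheory Filter Topology

noncomputable section

namespace LQ

variable {n m : ℕ}

def Om (n : ℕ) : Matrix (Fin n ⊕ Fin n) (Fin n ⊕ Fin n) ℝ :=
  Matrix.fromBlocks 0 1 (-1) 0

def Ham (A Q : Matrix (Fin n) (Fin n) ℝ) (B : Matrix (Fin n) (Fin m) ℝ) :
    Matrix (Fin n ⊕ Fin n) (Fin n ⊕ Fin n) ℝ :=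
  Matrix.fromBlocks (B * Bᵀ) A Aᵀ Q

def flow (A Q : Matrix (Fin n) (Fin n) ℝ) (B : Matrix (Fin n) (Fin m) ℝ) (τ : ℝ) :
    Matrix (Fin n ⊕ Fin n) (Fin n ⊕ Fin n) ℝ :=
  NormedSpace.exp ((-τ) • (Om n * Ham A Q B))

def R1 (A Q : Matrix (Fin n) (Fin n) ℝ) (B : Matrix (Fin n) (Fin m) ℝ) (τ : ℝ) :
    Matrix (Fin n) (Fin n) ℝ := (flow A Q B τ).toBlocks₁₁

def R2 (A Q : Matrix (Fin n) (Fin n) ℝ) (B : Matrix (Fin n) (Fin m) ℝ) (τ : ℝ) :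
    Matrix (Fin n) (Fin n) ℝ := (flow A Q B τ).toBlocks₁₂

def R3 (A Q : Matrix (Fin n) (Fin n) ℝ) (B : Matrix (Fin n) (Fin m) ℝ) (τ : ℝ) :
    Matrix (Fin n) (Fin n) ℝ := (flow A Q B τ).toBlocks₂₁

def R4 (A Q : Matrix (Fin n) (Fin n) ℝ) (B : Matrix (Fin n) (Fin m) ℝ) (τ : ℝ) :
    Matrix (Fin n) (Fin n) ℝ := (flow A Q B τ).toBlocks₂₂

def Kalman (A : Matrix (Fin n) (Fin n) ℝ) (B : Matrix (Fin n) (Fin m) ℝ) : Prop :=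
  Submodule.span ℝ
    {v : Fin n → ℝ | ∃ j : Fin n, ∃ i : Fin m, v = (A ^ (j : ℕ)).mulVec (Bᵀ i)} = ⊤

end LQ

theorem Real.geom_mean_le_arith_mean_univ {ι : Type*} [Fintype ι] [Nonempty ι] {z : ι → ℝ}
    (hz : ∀ i, 0 ≤ z i) :
    (∏ i, z i) ^ ((1:ℝ) / Fintype.card ι) ≤ (∑ i, z i) / Fintype.card ι := by
  simpa [one_div] using Real.geom_mean_le_arith_mean Finset.univ (fun _ => (1:ℝ)) z
    (fun _ _ => zero_le_one) (by simp [Fintype.card_pos]) (fun i _ => hz i)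

namespace Matrix

open scoped MatrixOrder

variable {ι : Type*} [Fintype ι] [DecidableEq ι]

lemma IsHermitian.eigenvalues_le_one {A : Matrix ι ι ℝ} (hA : A.IsHermitian)
    (h1A : (1 - A).PosSemidef) (i : ι) : hA.eigenvalues i ≤ 1 :=
  (CFC.le_one_iff A hA.isSelfAdjoint).1 (Matrix.le_iff.2 h1A) _
    (hA.eigenvalues_mem_spectrum_real i)

lemma IsHermitian.det_one_sub {A : Matrix ι ι ℝ} (hA : A.IsHermitian) :
    (1 - A).det = ∏ i, (1 - hA.eigenvalues i) := by
  simpa [eval_charpoly, Polynomial.eval_prod] using congrArg (Polynomial.eval 1) hA.charpoly_eq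

lemma PosSemidef.det_rpow_add_det_one_sub_rpow_le_one [Nonempty ι] {X : Matrix ι ι ℝ}
    (hX : X.PosSemidef) (h1X : (1 - X).PosSemidef) :
    X.det ^ ((1:ℝ) / Fintype.card ι) + (1 - X).det ^ ((1:ℝ) / Fintype.card ι) ≤ 1 := by
  have hcard : (Fintype.card ι : ℝ) ≠ 0 := Nat.cast_ne_zero.2 Fintype.card_ne_zero
  calc X.det ^ ((1:ℝ) / Fintype.card ι) + (1 - X).det ^ ((1:ℝ) / Fintype.card ι)
      ≤ (∑ i, hX.1.eigenvalues i) / Fintype.card ι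
          + (∑ i, (1 - hX.1.eigenvalues i)) / Fintype.card ι := by
        rw [hX.1.det_eq_prod_eigenvalues, hX.1.det_one_sub]
        gcongr
        · exact Real.geom_mean_le_arith_mean_univ hX.eigenvalues_nonneg
        · exact Real.geom_mean_le_arith_mean_univ fun i =>
            sub_nonneg.2 (hX.1.eigenvalues_le_one h1X i)
    _ = 1 := by
        rw [← add_div, ← Finset.sum_add_distrib]
        simp [hcard]

lemma PosSemidef.det_eq_zero_of_det_add_eq_zero {A B : Matrix ι ι ℝ} (hA : A.PosSemidef)
    (hB : B.PosSemidef) (h : (A + B).det = 0) : A.det = 0 := by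
  by_contra hA0
  exact (((hA.posDef_iff_det_ne_zero.2 hA0).add_posSemidef hB).det_pos).ne' h

/-- Minkowski's determinant inequality. -/
theorem PosSemidef.det_rpow_add_det_rpow_le [Nonempty ι] {A B : Matrix ι ι ℝ}
    (hA : A.PosSemidef) (hB : B.PosSemidef) :
    A.det ^ ((1:ℝ) / Fintype.card ι) + B.det ^ ((1:ℝ) / Fintype.card ι) ≤
      (A + B).det ^ ((1:ℝ) / Fintype.card ι) := by
  set p : ℝ := 1 / Fintype.card ι
  have hp : p ≠ 0 := one_div_ne_zero (Nat.cast_ne_zero.2 Fintype.card_ne_zero)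
  by_cases hAB : (A + B).det = 0
  · rw [hA.det_eq_zero_of_det_add_eq_zero hB hAB,
      hB.det_eq_zero_of_det_add_eq_zero hA (by rwa [add_comm]), hAB, Real.zero_rpow hp,
      add_zero]
  -- congruence by `R⁻¹`, where `A + B = Rᴴ R`, reduces to the case `A + B = 1`
  obtain ⟨R, hR⟩ := CStarAlgebra.nonneg_iff_eq_star_mul_self.mp (hA.add hB).nonneg
  rw [star_eq_conjTranspose] at hR
  have hRdet : IsUnit R.det := by
    refine isUnit_iff_ne_zero.2 fun h => hAB ?_
    rw [hR, det_mul, h, mul_zero]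
  set C := R⁻¹
  have hXY : Cᴴ * A * C + Cᴴ * B * C = 1 := by
    rw [← Matrix.add_mul, ← Matrix.mul_add, hR, Matrix.mul_assoc, Matrix.mul_assoc,
      mul_nonsing_inv _ hRdet, Matrix.mul_one, ← conjTranspose_mul, mul_nonsing_inv _ hRdet,
      conjTranspose_one]
  have hdet : ∀ M : Matrix ι ι ℝ, M.det = (A + B).det * (Cᴴ * M * C).det := fun M => by
    rw [hR, det_mul, det_mul, det_mul, det_conjTranspose, det_conjTranspose, det_nonsing_inv,
      Ring.inverse_eq_inv']
    simp only [star_trivial]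
    field_simp [hRdet.ne_zero]
  have hX := hA.conjTranspose_mul_mul_same C
  have hY := hB.conjTranspose_mul_mul_same C
  have hMink := hX.det_rpow_add_det_one_sub_rpow_le_one (by rwa [← hXY, add_sub_cancel_left])
  rw [← hXY, add_sub_cancel_left] at hMink
  have hABdet := (hA.add hB).det_nonneg
  calc A.det ^ p + B.det ^ p
      = (A + B).det ^ p * ((Cᴴ * A * C).det ^ p + (Cᴴ * B * C).det ^ p) := by
        rw [hdet A, hdet B, Real.mul_rpow hABdet hX.det_nonneg,
          Real.mul_rpow hABdet hY.det_nonneg, mul_add]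
    _ ≤ (A + B).det ^ p := mul_le_of_le_one_right (Real.rpow_nonneg hABdet p) hMink

end Matrix

namespace LQ

variable {n m : ℕ} {A Q : Matrix (Fin n) (Fin n) ℝ} {B : Matrix (Fin n) (Fin m) ℝ}

lemma flow_eq_fromBlocks (τ : ℝ) :
    flow A Q B τ = fromBlocks (R1 A Q B τ) (R2 A Q B τ) (R3 A Q B τ) (R4 A Q B τ) :=
  (fromBlocks_toBlocks _).symm

lemma flow_zero : flow A Q B 0 = 1 := by
  rw [flow, neg_zero, zero_smul, NormedSpace.exp_zero]

lemma R3_zero : R3 A Q B 0 = 0 := by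
  rw [R3, flow_zero, ← fromBlocks_one, toBlocks_fromBlocks₂₁]

lemma R4_zero : R4 A Q B 0 = 1 := by
  rw [R4, flow_zero, ← fromBlocks_one, toBlocks_fromBlocks₂₂]

lemma flow_add (a b : ℝ) : flow A Q B (a + b) = flow A Q B a * flow A Q B b := by
  rw [flow, flow, flow, neg_add, add_smul]
  exact Matrix.exp_add_of_commute _ _ ((Commute.refl _).smul_left _ |>.smul_right _)

lemma Om_eq_neg_J : Om n = -J (Fin n) ℝ := by
  rw [Om, J, fromBlocks_neg, neg_zero, neg_neg]

lemma J_mul_transpose_flow (hQ : Q.IsSymm) (τ : ℝ) :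
    J (Fin n) ℝ * (flow A Q B τ)ᵀ = flow A Q B (-τ) * J (Fin n) ℝ := by
  have hJ : IsUnit (J (Fin n) ℝ) := (isUnit_iff_isUnit_det _).2 (isUnit_det_J _ _)
  have hHam : (Ham A Q B)ᵀ = Ham A Q B := by
    rw [Ham, fromBlocks_transpose, transpose_mul, transpose_transpose, transpose_transpose, hQ.eq]
  have hconj : J (Fin n) ℝ * ((-τ) • (Om n * Ham A Q B))ᵀ * (J (Fin n) ℝ)⁻¹
      = (- -τ) • (Om n * Ham A Q B) := by
    rw [J_inv, Om_eq_neg_J, transpose_smul, transpose_mul, hHam, transpose_neg,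
      J_transpose]
    simp only [neg_neg, Matrix.mul_smul, Matrix.smul_mul, Matrix.mul_neg, Matrix.neg_mul,
      Matrix.mul_assoc, J_squared, Matrix.mul_one, neg_smul, smul_neg]
  rw [flow, flow, ← Matrix.exp_transpose, ← hconj, Matrix.exp_conj _ _ hJ, Matrix.mul_assoc,
    nonsing_inv_mul _ ((isUnit_iff_isUnit_det _).1 hJ), Matrix.mul_one]

lemma flow_mem_symplecticGroup (hQ : Q.IsSymm) (τ : ℝ) :
    flow A Q B τ ∈ symplecticGroup (Fin n) ℝ := by
  rw [SymplecticGroup.mem_iff, Matrix.mul_assoc, J_mul_transpose_flow hQ, ← Matrix.mul_assoc,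
    ← flow_add, add_neg_cancel, flow_zero, Matrix.one_mul]

lemma R3_neg (hQ : Q.IsSymm) (τ : ℝ) : R3 A Q B (-τ) = -(R3 A Q B τ)ᵀ := by
  have h := congrArg toBlocks₂₂ (J_mul_transpose_flow (A := A) (B := B) hQ τ)
  rw [flow_eq_fromBlocks, flow_eq_fromBlocks, fromBlocks_transpose, J, fromBlocks_multiply,
    fromBlocks_multiply] at h
  simpa [neg_eq_iff_eq_neg] using h.symm

lemma R1_transpose_mul_R3 (hQ : Q.IsSymm) (τ : ℝ) :
    (R1 A Q B τ)ᵀ * R3 A Q B τ = (R3 A Q B τ)ᵀ * R1 A Q B τ := by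
  have h := flow_mem_symplecticGroup (A := A) (B := B) hQ τ
  rw [flow_eq_fromBlocks, SymplecticGroup.fromBlocks_mem_iff] at h
  exact h.1

lemma R1_transpose_mul_R4_sub_R3_transpose_mul_R2 (hQ : Q.IsSymm) (τ : ℝ) :
    (R1 A Q B τ)ᵀ * R4 A Q B τ - (R3 A Q B τ)ᵀ * R2 A Q B τ = 1 := by
  have h := flow_mem_symplecticGroup (A := A) (B := B) hQ τ
  rw [flow_eq_fromBlocks, SymplecticGroup.fromBlocks_mem_iff] at h
  exact h.2.2

lemma R3_mul_R4_transpose (hQ : Q.IsSymm) (τ : ℝ) :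
    R3 A Q B τ * (R4 A Q B τ)ᵀ = R4 A Q B τ * (R3 A Q B τ)ᵀ := by
  have h := SymplecticGroup.transpose_mem (flow_mem_symplecticGroup (A := A) (B := B) hQ τ)
  rw [flow_eq_fromBlocks, fromBlocks_transpose, SymplecticGroup.fromBlocks_mem_iff] at h
  simpa using h.2.1

lemma flow_eq_flow_sub_mul (τ s : ℝ) : flow A Q B τ = flow A Q B (τ - s) * flow A Q B s := by
  rw [← flow_add, sub_add_cancel]

lemma R3_eq_R3_sub_mul (τ s : ℝ) :
    R3 A Q B τ = R3 A Q B (τ - s) * R1 A Q B s + R4 A Q B (τ - s) * R3 A Q B s := by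
  have h := congrArg toBlocks₂₁ (flow_eq_flow_sub_mul (A := A) (Q := Q) (B := B) τ s)
  rwa [flow_eq_fromBlocks (τ - s), flow_eq_fromBlocks s, fromBlocks_multiply,
    toBlocks_fromBlocks₂₁] at h

lemma R4_eq_R3_sub_mul (τ s : ℝ) :
    R4 A Q B τ = R3 A Q B (τ - s) * R2 A Q B s + R4 A Q B (τ - s) * R4 A Q B s := by
  have h := congrArg toBlocks₂₂ (flow_eq_flow_sub_mul (A := A) (Q := Q) (B := B) τ s)
  rwa [flow_eq_fromBlocks (τ - s), flow_eq_fromBlocks s, fromBlocks_multiply,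
    toBlocks_fromBlocks₂₂] at h

lemma inv_R3_neg (hQ : Q.IsSymm) {τ : ℝ} (hu : IsUnit (R3 A Q B τ)) :
    (R3 A Q B (-τ))⁻¹ = -((R3 A Q B τ)⁻¹)ᵀ := by
  refine inv_eq_left_inv ?_
  rw [R3_neg hQ, neg_mul_neg, ← transpose_mul, mul_nonsing_inv _ ((isUnit_iff_isUnit_det _).1 hu),
    transpose_one]

lemma det_R3_neg (hQ : Q.IsSymm) (τ : ℝ) :
    (R3 A Q B (-τ)).det = (-1) ^ n * (R3 A Q B τ).det := by
  rw [R3_neg hQ, det_neg, det_transpose, Fintype.card_fin]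

variable (A Q B) in
def S (τ : ℝ) : Matrix (Fin n) (Fin n) ℝ := (R3 A Q B τ)⁻¹ * R4 A Q B τ

lemma R3_mul_S {τ : ℝ} (hu : IsUnit (R3 A Q B τ)) : R3 A Q B τ * S A Q B τ = R4 A Q B τ := by
  rw [S, ← Matrix.mul_assoc, mul_nonsing_inv _ ((isUnit_iff_isUnit_det _).1 hu), Matrix.one_mul]

lemma S_transpose (hQ : Q.IsSymm) {τ : ℝ} (hu : IsUnit (R3 A Q B τ)) :
    (S A Q B τ)ᵀ = S A Q B τ := by
  have hu' := (isUnit_iff_isUnit_det _).1 hu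
  have huT : IsUnit (R3 A Q B τ)ᵀ.det := by rwa [det_transpose]
  rw [S, transpose_mul, transpose_nonsing_inv]
  calc (R4 A Q B τ)ᵀ * (R3 A Q B τ)ᵀ⁻¹
      = (R3 A Q B τ)⁻¹ * (R3 A Q B τ * (R4 A Q B τ)ᵀ) * (R3 A Q B τ)ᵀ⁻¹ := by
        rw [← Matrix.mul_assoc, nonsing_inv_mul _ hu', Matrix.one_mul]
    _ = (R3 A Q B τ)⁻¹ * (R4 A Q B τ * (R3 A Q B τ)ᵀ) * (R3 A Q B τ)ᵀ⁻¹ := by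
        rw [R3_mul_R4_transpose hQ]
    _ = (R3 A Q B τ)⁻¹ * R4 A Q B τ := by
        rw [Matrix.mul_assoc, Matrix.mul_assoc, mul_nonsing_inv _ huT, Matrix.mul_one]

lemma R2_sub_R1_mul_S (hQ : Q.IsSymm) {τ : ℝ} (hu : IsUnit (R3 A Q B τ)) :
    R2 A Q B τ - R1 A Q B τ * S A Q B τ = -((R3 A Q B τ)⁻¹)ᵀ := by
  have h : (R3 A Q B τ)ᵀ⁻¹ = R1 A Q B τ * S A Q B τ - R2 A Q B τ := inv_eq_right_inv <| by
    rw [Matrix.mul_sub, ← Matrix.mul_assoc, ← R1_transpose_mul_R3 hQ, Matrix.mul_assoc,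
      R3_mul_S hu, R1_transpose_mul_R4_sub_R3_transpose_mul_R2 hQ]
  rw [transpose_nonsing_inv, h, neg_sub]

lemma R4_sub_R3_mul_S (hQ : Q.IsSymm) {s : ℝ} (hu : IsUnit (R3 A Q B s)) (τ : ℝ) :
    R4 A Q B τ - R3 A Q B τ * S A Q B s = R3 A Q B (τ - s) * (R3 A Q B (-s))⁻¹ := by
  have h : R3 A Q B (τ - s) * (R2 A Q B s - R1 A Q B s * S A Q B s)
      + R4 A Q B (τ - s) * (R4 A Q B s - R3 A Q B s * S A Q B s)
      = R4 A Q B τ - R3 A Q B τ * S A Q B s := by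
    rw [R4_eq_R3_sub_mul τ s, R3_eq_R3_sub_mul τ s]
    noncomm_ring
  rw [← h, R2_sub_R1_mul_S hQ hu, R3_mul_S hu, sub_self, Matrix.mul_zero, add_zero,
    inv_R3_neg hQ hu, Matrix.mul_neg]

lemma S_sub_S (hQ : Q.IsSymm) {τ s : ℝ} (huτ : IsUnit (R3 A Q B τ))
    (hus : IsUnit (R3 A Q B s)) :
    S A Q B τ - S A Q B s = (R3 A Q B τ)⁻¹ * R3 A Q B (τ - s) * (R3 A Q B (-s))⁻¹ := by
  rw [Matrix.mul_assoc, ← R4_sub_R3_mul_S hQ hus, Matrix.mul_sub, ← Matrix.mul_assoc,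
    nonsing_inv_mul _ ((isUnit_iff_isUnit_det _).1 huτ), Matrix.one_mul, S]

section Derivative

attribute [local instance] Matrix.linftyOpNormedAddCommGroup Matrix.linftyOpNormedRing
  Matrix.linftyOpNormedAlgebra

lemma _root_.HasDerivAt.linearMap_comp {E F : Type*} [NormedAddCommGroup E] [NormedSpace ℝ E]
    [FiniteDimensional ℝ E] [NormedAddCommGroup F] [NormedSpace ℝ F] (φ : E →ₗ[ℝ] F)
    {f : ℝ → E} {f' : E} {t : ℝ} (hf : HasDerivAt f f' t) :
    HasDerivAt (fun t => φ (f t)) (φ f') t :=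
  (LinearMap.toContinuousLinearMap φ).hasFDerivAt.comp_hasDerivAt t hf

lemma hasDerivAt_flow (τ : ℝ) :
    HasDerivAt (flow A Q B) (fromBlocks (-Aᵀ) (-Q) (B * Bᵀ) A * flow A Q B τ) τ := by
  have hM : -(Om n * Ham A Q B) = fromBlocks (-Aᵀ) (-Q) (B * Bᵀ) A := by
    rw [Om, Ham, fromBlocks_multiply, fromBlocks_neg]
    simp
  have h := hasDerivAt_exp_smul_const' (𝕂 := ℝ) (-(Om n * Ham A Q B)) τ
  simp only [smul_neg, ← neg_smul] at h
  rwa [hM] at h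

lemma hasDerivAt_R3 (τ : ℝ) :
    HasDerivAt (R3 A Q B) (B * Bᵀ * R1 A Q B τ + A * R3 A Q B τ) τ := by
  let φ : Matrix (Fin n ⊕ Fin n) (Fin n ⊕ Fin n) ℝ →ₗ[ℝ] Matrix (Fin n) (Fin n) ℝ :=
    { toFun := toBlocks₂₁, map_add' := fun _ _ => rfl, map_smul' := fun _ _ => rfl }
  refine ((hasDerivAt_flow τ).linearMap_comp φ).congr_deriv ?_
  rw [flow_eq_fromBlocks τ, fromBlocks_multiply]
  exact toBlocks_fromBlocks₂₁ _ _ _ _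

lemma hasDerivAt_R4 (τ : ℝ) :
    HasDerivAt (R4 A Q B) (B * Bᵀ * R2 A Q B τ + A * R4 A Q B τ) τ := by
  let φ : Matrix (Fin n ⊕ Fin n) (Fin n ⊕ Fin n) ℝ →ₗ[ℝ] Matrix (Fin n) (Fin n) ℝ :=
    { toFun := toBlocks₂₂, map_add' := fun _ _ => rfl, map_smul' := fun _ _ => rfl }
  refine ((hasDerivAt_flow τ).linearMap_comp φ).congr_deriv ?_
  rw [flow_eq_fromBlocks τ, fromBlocks_multiply]
  exact toBlocks_fromBlocks₂₂ _ _ _ _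

lemma _root_.HasDerivAt.matrix_inv {ι : Type*} [Fintype ι] [DecidableEq ι]
    {f : ℝ → Matrix ι ι ℝ} {f' : Matrix ι ι ℝ} {t : ℝ} (hf : HasDerivAt f f' t)
    (hu : IsUnit (f t)) : HasDerivAt (fun t => (f t)⁻¹) (-((f t)⁻¹ * f' * (f t)⁻¹)) t := by
  obtain ⟨u, hu⟩ := hu
  have hinv := hasFDerivAt_ringInverse (𝕜 := ℝ) u
  rw [hu] at hinv
  have h := hinv.comp_hasDerivAt t hf
  simp only [Function.comp_def, ← nonsing_inv_eq_ringInverse] at h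
  refine h.congr_deriv ?_
  simp [coe_units_inv, hu]

lemma hasDerivAt_S (hQ : Q.IsSymm) {r : ℝ} (hu : IsUnit (R3 A Q B r)) :
    HasDerivAt (S A Q B) (-((R3 A Q B r)⁻¹ * (B * Bᵀ) * ((R3 A Q B r)⁻¹)ᵀ)) r := by
  refine (((hasDerivAt_R3 r).matrix_inv hu).mul (hasDerivAt_R4 r)).congr_deriv ?_
  calc _ = (R3 A Q B r)⁻¹ * (B * Bᵀ) * (R2 A Q B r - R1 A Q B r * S A Q B r)
        + (R3 A Q B r)⁻¹ * A * (R4 A Q B r - R3 A Q B r * S A Q B r) := by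
        rw [S]; noncomm_ring
    _ = _ := by
        rw [R2_sub_R1_mul_S hQ hu, R3_mul_S hu, sub_self, Matrix.mul_zero, add_zero,
          Matrix.mul_neg]

lemma S_sub_S_posSemidef (hQ : Q.IsSymm) {τ s : ℝ} (hτs : τ ≤ s)
    (hR3 : ∀ r ∈ Set.Icc τ s, IsUnit (R3 A Q B r)) : (S A Q B τ - S A Q B s).PosSemidef := by
  refine PosSemidef.of_dotProduct_mulVec_nonneg ?_ fun x => ?_
  · rw [IsHermitian, conjTranspose_eq_transpose_of_trivial, transpose_sub,
      S_transpose hQ (hR3 τ ⟨le_rfl, hτs⟩), S_transpose hQ (hR3 s ⟨hτs, le_rfl⟩)]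
  let φ : Matrix (Fin n) (Fin n) ℝ →ₗ[ℝ] ℝ :=
    { toFun := fun M => x ⬝ᵥ M *ᵥ x
      map_add' := fun M N => by simp only [add_mulVec, dotProduct_add]
      map_smul' := fun c M => by simp only [smul_mulVec, dotProduct_smul, RingHom.id_apply] }
  set g : ℝ → ℝ := fun r => x ⬝ᵥ ((R3 A Q B r)⁻¹ * B * ((R3 A Q B r)⁻¹ * B)ᴴ) *ᵥ x
  have hg : ∀ r, 0 ≤ g r := fun r => by
    simpa only [star_trivial] using
      (posSemidef_self_mul_conjTranspose ((R3 A Q B r)⁻¹ * B)).dotProduct_mulVec_nonneg x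
  have hder : ∀ r ∈ Set.Icc τ s, HasDerivAt (fun r => φ (S A Q B r)) (-g r) r := fun r hr => by
    refine ((hasDerivAt_S hQ (hR3 r hr)).linearMap_comp φ).congr_deriv ?_
    simp [φ, g, Matrix.mul_assoc, neg_mulVec]
  have hanti : AntitoneOn (fun r => φ (S A Q B r)) (Set.Icc τ s) :=
    antitoneOn_of_hasDerivWithinAt_nonpos (f' := fun r => -g r) (convex_Icc τ s)
      (fun r hr => (hder r hr).continuousAt.continuousWithinAt)
      (fun r hr => (hder r (interior_subset hr)).hasDerivWithinAt)
      (fun r _ => neg_nonpos.2 (hg r))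
  have := hanti ⟨le_rfl, hτs⟩ ⟨hτs, le_rfl⟩ hτs
  simp only [φ, LinearMap.coe_mk, AddHom.coe_mk] at this
  simpa [sub_mulVec, dotProduct_sub] using this

end Derivative

lemma det_R3_mul_det_S_sub_S (hQ : Q.IsSymm) {τ s : ℝ} (huτ : IsUnit (R3 A Q B τ))
    (hus : IsUnit (R3 A Q B s)) :
    (R3 A Q B τ).det * (S A Q B τ - S A Q B s).det =
      (R3 A Q B (τ - s)).det / (R3 A Q B (-s)).det := by
  rw [S_sub_S hQ huτ hus, det_mul, det_mul, det_nonsing_inv, det_nonsing_inv,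
    Ring.inverse_eq_inv', ← mul_assoc, ← mul_assoc,
    mul_inv_cancel₀ ((isUnit_iff_isUnit_det _).1 huτ).ne_zero, one_mul, div_eq_mul_inv]

lemma det_R3_sub_div_det_R3_neg (hQ : Q.IsSymm) (τ s : ℝ) :
    (R3 A Q B (τ - s)).det / (R3 A Q B (-s)).det = (R3 A Q B (s - τ)).det / (R3 A Q B s).det := by
  rw [← neg_sub, det_R3_neg hQ, det_R3_neg hQ, mul_div_mul_left _ _ (by simp)]

section Jacobian

variable (A Q B) in
def jacobian (Hψ : Matrix (Fin n) (Fin n) ℝ) (τ : ℝ) : Matrix (Fin n) (Fin n) ℝ :=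
  R3 A Q B τ * Hψ + R4 A Q B τ

variable {Hψ : Matrix (Fin n) (Fin n) ℝ} {T : ℝ} (hQ : Q.IsSymm)
  (hR3 : ∀ r ∈ Set.Ioc 0 T, IsUnit (R3 A Q B r))
  (hpos : ∀ r ∈ Set.Ioc 0 T, (Hψ + S A Q B r).PosSemidef)

lemma jacobian_zero : jacobian A Q B Hψ 0 = 1 := by
  rw [jacobian, R3_zero, R4_zero, Matrix.zero_mul, zero_add]

lemma jacobian_eq_R3_mul {τ : ℝ} (hu : IsUnit (R3 A Q B τ)) :
    jacobian A Q B Hψ τ = R3 A Q B τ * (Hψ + S A Q B τ) := by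
  rw [jacobian, Matrix.mul_add, R3_mul_S hu]

include hQ hR3 in
lemma det_R3_pos {r : ℝ} (hr : r ∈ Set.Ioc 0 T) : 0 < (R3 A Q B r).det := by
  obtain ⟨hr0, hrT⟩ := hr
  have hhalf := hR3 (r / 2) ⟨by positivity, by linarith⟩
  have hur := hR3 r ⟨hr0, hrT⟩
  have hD := S_sub_S_posSemidef hQ (by linarith : r / 2 ≤ r)
    fun t ht => hR3 t ⟨by linarith [ht.1], ht.2.trans hrT⟩
  have h := det_R3_mul_det_S_sub_S hQ hhalf hur
  rw [show r / 2 - r = -(r / 2) by ring, det_R3_neg hQ, det_R3_neg hQ,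
    mul_div_mul_left _ _ (by simp), div_eq_mul_inv] at h
  have hdet : (S A Q B (r / 2) - S A Q B r).det = (R3 A Q B r).det⁻¹ :=
    mul_left_cancel₀ ((isUnit_iff_isUnit_det _).1 hhalf).ne_zero h
  have hne := ((isUnit_iff_isUnit_det _).1 hur).ne_zero
  exact inv_pos.1 (lt_of_le_of_ne (hdet ▸ hD.det_nonneg) (inv_ne_zero hne).symm)

include hQ hR3 in
lemma det_R3_nonneg {r : ℝ} (hr : r ∈ Set.Icc 0 T) : 0 ≤ (R3 A Q B r).det := by
  rcases hr.1.eq_or_lt with rfl | hr0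
  · rw [R3_zero]
    exact PosSemidef.zero.det_nonneg
  · exact (det_R3_pos hQ hR3 ⟨hr0, hr.2⟩).le

include hQ hR3 hpos in
lemma det_jacobian_nonneg {τ : ℝ} (hτ : τ ∈ Set.Icc 0 T) : 0 ≤ (jacobian A Q B Hψ τ).det := by
  rcases hτ.1.eq_or_lt with rfl | hτ0
  · simp [jacobian_zero]
  · rw [jacobian_eq_R3_mul (hR3 τ ⟨hτ0, hτ.2⟩), det_mul]
    exact mul_nonneg (det_R3_pos hQ hR3 ⟨hτ0, hτ.2⟩).le (hpos τ ⟨hτ0, hτ.2⟩).det_nonneg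

include hQ hR3 hpos in
theorem jacobian_estimate (hn : 0 < n) {τ s : ℝ} (hτ : 0 ≤ τ) (hτs : τ ≤ s) (hsT : s ≤ T)
    (hs : 0 < s) :
    ((R3 A Q B (τ - s)).det / (R3 A Q B (-s)).det) ^ ((1:ℝ) / n) +
        ((R3 A Q B τ).det / (R3 A Q B s).det) ^ ((1:ℝ) / n) *
          (jacobian A Q B Hψ s).det ^ ((1:ℝ) / n) ≤
      (jacobian A Q B Hψ τ).det ^ ((1:ℝ) / n) := by
  set p : ℝ := 1 / n
  have hp : p ≠ 0 := one_div_ne_zero (Nat.cast_ne_zero.2 hn.ne')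
  have hds := det_R3_pos hQ hR3 ⟨hs, hsT⟩
  have : Nonempty (Fin n) := ⟨⟨0, hn⟩⟩
  rcases hτ.eq_or_lt with rfl | hτ0
  · have h1 : (R3 A Q B (0 - s)).det / (R3 A Q B (-s)).det = 1 := by
      rw [zero_sub, div_self]
      rw [det_R3_neg hQ]
      exact mul_ne_zero (by simp) hds.ne'
    rw [h1, jacobian_zero, R3_zero, det_zero, det_one, zero_div, Real.zero_rpow hp,
      zero_mul, add_zero]
  have hτs' : Set.Icc τ s ⊆ Set.Ioc 0 T := fun r hr => ⟨hτ0.trans_le hr.1, hr.2.trans hsT⟩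
  have huτ := hR3 τ (hτs' ⟨le_rfl, hτs⟩)
  have hus := hR3 s (hτs' ⟨hτs, le_rfl⟩)
  have hdτ := det_R3_pos hQ hR3 (hτs' ⟨le_rfl, hτs⟩)
  set D := S A Q B τ - S A Q B s
  set P := Hψ + S A Q B s
  have hD : D.PosSemidef := S_sub_S_posSemidef hQ hτs fun r hr => hR3 r (hτs' hr)
  have hP : P.PosSemidef := hpos s ⟨hs, hsT⟩
  have hMink := hD.det_rpow_add_det_rpow_le hP
  rw [Fintype.card_fin] at hMink
  have hJτ : (jacobian A Q B Hψ τ).det = (R3 A Q B τ).det * (D + P).det := by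
    rw [jacobian_eq_R3_mul huτ, det_mul, show Hψ + S A Q B τ = D + P by simp only [D, P]; abel]
  have hJs : (R3 A Q B τ).det / (R3 A Q B s).det * (jacobian A Q B Hψ s).det
      = (R3 A Q B τ).det * P.det := by
    rw [jacobian_eq_R3_mul hus, det_mul, div_mul_eq_mul_div, mul_div_assoc,
      mul_div_cancel_left₀ _ hds.ne']
  calc ((R3 A Q B (τ - s)).det / (R3 A Q B (-s)).det) ^ p +
        ((R3 A Q B τ).det / (R3 A Q B s).det) ^ p * (jacobian A Q B Hψ s).det ^ p
      = (R3 A Q B τ).det ^ p * (D.det ^ p + P.det ^ p) := by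
        rw [← Real.mul_rpow (div_pos hdτ hds).le (det_jacobian_nonneg hQ hR3 hpos ⟨hs.le, hsT⟩),
          hJs, ← det_R3_mul_det_S_sub_S hQ huτ hus, Real.mul_rpow hdτ.le hD.det_nonneg,
          Real.mul_rpow hdτ.le hP.det_nonneg, mul_add]
    _ ≤ (R3 A Q B τ).det ^ p * (D + P).det ^ p := by gcongr
    _ = (jacobian A Q B Hψ τ).det ^ p := by
        rw [hJτ, Real.mul_rpow hdτ.le (hD.add hP).det_nonneg]

include hQ hR3 hpos in
theorem jacobian_estimate_terms {τ s : ℝ} (hτ : 0 ≤ τ) (hτs : τ ≤ s) (hsT : s ≤ T) :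
    0 ≤ ((R3 A Q B (τ - s)).det / (R3 A Q B (-s)).det) ^ ((1:ℝ) / n) ∧
    0 ≤ ((R3 A Q B τ).det / (R3 A Q B s).det) ^ ((1:ℝ) / n) *
      (jacobian A Q B Hψ s).det ^ ((1:ℝ) / n) ∧
    (τ < s → 0 < ((R3 A Q B (τ - s)).det / (R3 A Q B (-s)).det) ^ ((1:ℝ) / n)) := by
  have hs : s ∈ Set.Icc 0 T := ⟨hτ.trans hτs, hsT⟩
  rw [det_R3_sub_div_det_R3_neg hQ]
  refine ⟨Real.rpow_nonneg (div_nonneg ?_ (det_R3_nonneg hQ hR3 hs)) _,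
    mul_nonneg (Real.rpow_nonneg (div_nonneg (det_R3_nonneg hQ hR3 ⟨hτ, hτs.trans hsT⟩)
      (det_R3_nonneg hQ hR3 hs)) _) (Real.rpow_nonneg (det_jacobian_nonneg hQ hR3 hpos hs) _),
    fun hτs' => Real.rpow_pos_of_pos (div_pos ?_ (det_R3_pos hQ hR3 ⟨hτ.trans_lt hτs', hsT⟩)) _⟩
  · exact det_R3_nonneg hQ hR3 ⟨sub_nonneg.2 hτs, by linarith⟩
  · exact det_R3_pos hQ hR3 ⟨sub_pos.2 hτs', by linarith⟩

include hQ hR3 hpos in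
lemma det_jacobian_pos (hn : 0 < n) {τ : ℝ} (hτ : τ ∈ Set.Ico 0 T) :
    0 < (jacobian A Q B Hψ τ).det := by
  obtain ⟨hτ0, hτT⟩ := hτ
  have hest := jacobian_estimate hQ hR3 hpos hn hτ0 hτT.le le_rfl (hτ0.trans_lt hτT)
  obtain ⟨-, hsecond, hfirst⟩ := jacobian_estimate_terms hQ hR3 hpos hτ0 hτT.le le_rfl
  refine (det_jacobian_nonneg hQ hR3 hpos ⟨hτ0, hτT.le⟩).lt_of_ne' fun h => ?_
  rw [h, Real.zero_rpow (one_div_ne_zero (Nat.cast_ne_zero.2 hn.ne'))] at hest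
  linarith [hfirst hτT]

end Jacobian

theorem main_jacobian_estimate_general
    {n m : ℕ} (hm : 1 ≤ m) (hmn : m ≤ n)
    (A Q : Matrix (Fin n) (Fin n) ℝ) (B : Matrix (Fin n) (Fin m) ℝ)
    (hQ : Q.IsSymm)
    (T : ℝ)
    (hR3 : ∀ τ ∈ Set.Ioc 0 T, IsUnit (R3 A Q B τ))
    (Hψ : Matrix (Fin n) (Fin n) ℝ)
    (hpos : ∀ s ∈ Set.Ioc (0:ℝ) T, (Hψ + (R3 A Q B s)⁻¹ * R4 A Q B s).PosSemidef) :
    letI N : ℝ → Matrix (Fin n) (Fin n) ℝ := fun τ => R3 A Q B τ * Hψ + R4 A Q B τ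
    (∀ τ s : ℝ, 0 ≤ τ → τ ≤ s → s ≤ T → 0 < s →
      ((N τ).det ^ ((1:ℝ)/(n:ℝ)) ≥
        ((R3 A Q B (τ - s)).det / (R3 A Q B (-s)).det) ^ ((1:ℝ)/(n:ℝ)) +
        ((R3 A Q B τ).det / (R3 A Q B s).det) ^ ((1:ℝ)/(n:ℝ)) *
          (N s).det ^ ((1:ℝ)/(n:ℝ))) ∧
      0 ≤ ((R3 A Q B (τ - s)).det / (R3 A Q B (-s)).det) ^ ((1:ℝ)/(n:ℝ)) ∧
      0 ≤ ((R3 A Q B τ).det / (R3 A Q B s).det) ^ ((1:ℝ)/(n:ℝ)) *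
            (N s).det ^ ((1:ℝ)/(n:ℝ)) ∧
      (τ < s → 0 < ((R3 A Q B (τ - s)).det / (R3 A Q B (-s)).det) ^ ((1:ℝ)/(n:ℝ)))) ∧
    (∀ τ ∈ Set.Ico (0:ℝ) T, 0 < (N τ).det) := by
  have hn : 0 < n := lt_of_lt_of_le hm hmn
  exact ⟨fun τ s hτ hτs hsT hs => ⟨jacobian_estimate hQ hR3 hpos hn hτ hτs hsT hs,
    jacobian_estimate_terms hQ hR3 hpos hτ hτs hsT⟩, fun τ hτ => det_jacobian_pos hQ hR3 hpos hn hτ⟩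

/-- Main Jacobian estimate: for `N(τ) = R₃(τ)Hψ + R₄(τ)` with `Hψ` symmetric and
`Hψ + R₃(s)⁻¹R₄(s) ⪰ 0` on `(0,T]`, the `n`-th roots of the determinants satisfy the
concavity-type estimate, the two terms on the right-hand side are nonnegative (the first
strictly positive for `τ < s`), and `det N(τ) > 0` for `τ ∈ [0,T)`. -/
theorem main_jacobian_estimate
    {n m : ℕ} (hm : 1 ≤ m) (hmn : m ≤ n)
    (A Q : Matrix (Fin n) (Fin n) ℝ) (B : Matrix (Fin n) (Fin m) ℝ)
    (hQ : Q.IsSymm) (hB : B.rank = m)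
    (T : ℝ) (hT : 0 < T) (hKal : Kalman A B)
    (hR3 : ∀ τ ∈ Set.Ioc 0 T, IsUnit (R3 A Q B τ))
    (Hψ : Matrix (Fin n) (Fin n) ℝ) (hHψ : Hψ.IsSymm)
    (hpos : ∀ s ∈ Set.Ioc (0:ℝ) T, (Hψ + (R3 A Q B s)⁻¹ * R4 A Q B s).PosSemidef) :
    letI N : ℝ → Matrix (Fin n) (Fin n) ℝ := fun τ => R3 A Q B τ * Hψ + R4 A Q B τ
    (∀ τ s : ℝ, 0 ≤ τ → τ ≤ s → s ≤ T → 0 < s →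
      ((N τ).det ^ ((1:ℝ)/(n:ℝ)) ≥
        ((R3 A Q B (τ - s)).det / (R3 A Q B (-s)).det) ^ ((1:ℝ)/(n:ℝ)) +
        ((R3 A Q B τ).det / (R3 A Q B s).det) ^ ((1:ℝ)/(n:ℝ)) *
          (N s).det ^ ((1:ℝ)/(n:ℝ))) ∧
      0 ≤ ((R3 A Q B (τ - s)).det / (R3 A Q B (-s)).det) ^ ((1:ℝ)/(n:ℝ)) ∧
      0 ≤ ((R3 A Q B τ).det / (R3 A Q B s).det) ^ ((1:ℝ)/(n:ℝ)) *
            (N s).det ^ ((1:ℝ)/(n:ℝ)) ∧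
      (τ < s → 0 < ((R3 A Q B (τ - s)).det / (R3 A Q B (-s)).det) ^ ((1:ℝ)/(n:ℝ)))) ∧
    (∀ τ ∈ Set.Ico (0:ℝ) T, 0 < (N τ).det) :=
  main_jacobian_estimate_general hm hmn A Q B hQ T hR3 Hψ hpos

end LQ
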